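/- arXiv:1312.4987 — 2 statements merged into one kernel-verified Lean document; each statement's English description precedes it below -/
import Mathlib

section
/- If f : X → ℂ is a uniformly continuous eigenfunction of a continuous ℝ^d-action T on a metric space X with eigenvalue α ∈ ℝ^d (i.e., f(T_y x) = exp(2πi α·y) f(x) for all x, y), and there exist points p, q ∈ X, vectors x, y ∈ ℝ^d such that dist(T_{ty} p, T_{ty} q) → 0 as t → ∞ and dist(T_{ty} p, T_{ty}(T_{-x} q)) → 0 as t → -∞, then α · x ∈ ℤ. -/
open Filter Topology Real

/-!
Uniform continuity of `f` turns `dist (T_{ty} a) (T_{ty} b) → 0` into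
`dist (f (T_{ty} a)) (f (T_{ty} b)) → 0`, while the eigenvalue equation makes this distance
constant, equal to `dist (f a) (f b)`. Hence `f p = f q` and `f p = f (T_{-x} q)`, so
`f q = exp (-2πi α·x) f q`, and `f q ≠ 0` forces `α·x ∈ ℤ`.
-/

namespace Complex

theorem norm_exp_two_pi_mul_I_mul_ofReal (r : ℝ) : ‖exp (2 * π * I * r)‖ = 1 := by
  rw [show 2 * π * I * r = ((2 * π * r : ℝ) : ℂ) * I by push_cast; ring]
  exact norm_exp_ofReal_mul_I _

theorem exp_two_pi_mul_I_mul_ofReal_eq_one_iff (r : ℝ) :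
    exp (2 * π * I * r) = 1 ↔ ∃ m : ℤ, r = m := by
  have h2pi : (2 * π * I : ℂ) ≠ 0 := by simp [pi_ne_zero]
  rw [exp_eq_one_iff]
  refine exists_congr fun m => ⟨fun h => ?_, fun h => by rw [h]; push_cast; ring⟩
  exact_mod_cast mul_left_cancel₀ h2pi (h.trans (mul_comm _ _))

end Complex

theorem UniformContinuous.tendsto_dist_comp_zero {ι α β : Type*} [PseudoMetricSpace α]
    [PseudoMetricSpace β] {f : α → β} (hf : UniformContinuous f) {l : Filter ι}
    {u v : ι → α} (h : Tendsto (fun i => dist (u i) (v i)) l (𝓝 0)) :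
    Tendsto (fun i => dist (f (u i)) (f (v i))) l (𝓝 0) :=
  tendsto_uniformity_iff_dist_tendsto_zero.1 <|
    Tendsto.comp hf (tendsto_uniformity_iff_dist_tendsto_zero (f := fun i => (u i, v i)).2 h)

def IsEigenfunction {V X : Type*} [NormedAddCommGroup V] [InnerProductSpace ℝ V]
    (T : V → X → X) (f : X → ℂ) (α : V) : Prop :=
  ∀ y z, f (T y z) = Complex.exp (2 * π * Complex.I * (inner ℝ α y : ℝ)) * f z

namespace IsEigenfunction

variable {V X : Type*} [NormedAddCommGroup V] [InnerProductSpace ℝ V]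
  {T : V → X → X} {f : X → ℂ} {α : V}

theorem dist_apply_eq (hf : IsEigenfunction T f α) (y : V) (a b : X) :
    dist (f (T y a)) (f (T y b)) = dist (f a) (f b) := by
  rw [dist_eq_norm, hf, hf, ← mul_sub, norm_mul,
    Complex.norm_exp_two_pi_mul_I_mul_ofReal, one_mul, ← dist_eq_norm]

theorem eq_of_tendsto_dist [PseudoMetricSpace X] (hf : IsEigenfunction T f α)
    (hf_uc : UniformContinuous f) {ι : Type*} {l : Filter ι} [l.NeBot] {v : ι → V} {a b : X}
    (h : Tendsto (fun i => dist (T (v i) a) (T (v i) b)) l (𝓝 0)) : f a = f b := by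
  have h_const : Tendsto (fun _ : ι => dist (f a) (f b)) l (𝓝 0) := by
    simpa only [hf.dist_apply_eq] using hf_uc.tendsto_dist_comp_zero h
  exact dist_eq_zero.1 (tendsto_nhds_unique tendsto_const_nhds h_const)

theorem exists_int_inner_eq_of_apply_eq (hf : IsEigenfunction T f α) {v : V} {z : X}
    (hz : f z ≠ 0) (h : f (T v z) = f z) : ∃ m : ℤ, (inner ℝ α v : ℝ) = m := by
  have h_one : Complex.exp (2 * π * Complex.I * (inner ℝ α v : ℝ)) = 1 :=
    mul_right_cancel₀ hz (by rw [← hf, h, one_mul])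
  exact (Complex.exp_two_pi_mul_I_mul_ofReal_eq_one_iff _).1 h_one

end IsEigenfunction

theorem eigenvalue_integral_on_fracture_general
    {d : ℕ} {X : Type*} [MetricSpace X]
    (T : EuclideanSpace ℝ (Fin d) → X → X)
    (f : X → ℂ) (hf_uc : UniformContinuous f)
    (hf_ne : ∃ c > 0, ∀ z, c ≤ ‖f z‖)
    (α : EuclideanSpace ℝ (Fin d))
    (h_eig : ∀ (y : EuclideanSpace ℝ (Fin d)) (z : X),
      f (T y z) = Complex.exp (2 * Real.pi * Complex.I * (inner ℝ α y : ℝ)) * f z)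
    (p q : X) (x y : EuclideanSpace ℝ (Fin d))
    (h_plus : Tendsto (fun t : ℝ => dist (T (t • y) p) (T (t • y) q)) atTop (nhds 0))
    (h_minus : Tendsto (fun t : ℝ => dist (T (t • y) p) (T (t • y) (T (-x) q))) atBot (nhds 0)) :
    ∃ m : ℤ, (inner ℝ α x : ℝ) = m := by
  have hf : IsEigenfunction T f α := h_eig
  have hq : f q ≠ 0 := by
    obtain ⟨c, hc, hfc⟩ := hf_ne
    exact norm_pos_iff.1 (hc.trans_le (hfc q))
  have h_shift : f (T (-x) q) = f q :=
    (hf.eq_of_tendsto_dist hf_uc h_minus).symm.trans (hf.eq_of_tendsto_dist hf_uc h_plus)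
  obtain ⟨m, hm⟩ := hf.exists_int_inner_eq_of_apply_eq hq h_shift
  exact ⟨-m, by rw [inner_neg_right] at hm; push_cast; linarith⟩

/-- If `f` is a uniformly continuous eigenfunction (bounded away from zero)
of a continuous `ℝ^d`-action `T` with eigenvalue `α`, and the space has a
fracture in the direction `x` witnessed by points `p, q` and direction `y`,
then `α · x` is an integer. -/
theorem eigenvalue_integral_on_fracture
    {d : ℕ} {X : Type*} [MetricSpace X]
    (T : EuclideanSpace ℝ (Fin d) → X → X)
    (h_act : ∀ a b z, T a (T b z) = T (a + b) z)
    (f : X → ℂ) (hf_uc : UniformContinuous f)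
    (hf_ne : ∃ c > 0, ∀ z, c ≤ ‖f z‖)
    (α : EuclideanSpace ℝ (Fin d))
    (h_eig : ∀ (y : EuclideanSpace ℝ (Fin d)) (z : X),
      f (T y z) = Complex.exp (2 * Real.pi * Complex.I * (inner ℝ α y : ℝ)) * f z)
    (p q : X) (x y : EuclideanSpace ℝ (Fin d))
    (h_plus : Tendsto (fun t : ℝ => dist (T (t • y) p) (T (t • y) q)) atTop (nhds 0))
    (h_minus : Tendsto (fun t : ℝ => dist (T (t • y) p) (T (t • y) (T (-x) q))) atBot (nhds 0)) :
    ∃ m : ℤ, (inner ℝ α x : ℝ) = m :=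
  eigenvalue_integral_on_fracture_general T f hf_uc hf_ne α h_eig p q x y h_plus h_minus
end

section
/- The set { (2^j / 3^k) · y : j, k ∈ ℕ, (2^j/3^k)·y ∈ [1,3] } is dense in the interval [1,3], for any fixed y ∈ [1,3]. -/
/-!
Taking logarithms, the numbers `2^j / 3^k` become `j log 2 - k log 3`. Since `log 2 / log 3` is
irrational (`2^n ≠ 3^m`), the multiples `j log 2` are dense modulo `log 3`, and they stay dense when
`j` is restricted to be large, which forces the correcting multiple `k log 3` to have `k ≥ 0`.
Hence `{2^j / 3^k · y}` is dense in `(0, ∞)`, and in particular in the open interval `(1, 3)`.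
-/

open Real Set Filter Topology

theorem irrational_log_two_div_log_three : Irrational (log 2 / log 3) := by
  rintro ⟨q, hq⟩
  have hq_pos : 0 < q := by
    exact_mod_cast hq ▸ div_pos (log_pos one_lt_two) (log_pos (by norm_num))
  have hq' : (q.den : ℝ) * log 2 = q.num * log 3 := by
    rw [Rat.cast_def] at hq
    field_simp at hq
    linarith
  lift q.num to ℕ using (Rat.num_pos.2 hq_pos).le with m
  have hlog : log ((2 : ℝ) ^ q.den) = log ((3 : ℝ) ^ m) := by
    rw [log_pow, log_pow]
    exact_mod_cast hq'
  have hpow : (2 : ℕ) ^ q.den = 3 ^ m := by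
    exact_mod_cast log_injOn_pos (by simp) (by simp) hlog
  have hparity := congrArg (· % 2) hpow
  simp [Nat.pow_mod, q.den_ne_zero] at hparity

theorem dense_nat_mul_sub_nat_mul {a b : ℝ} (ha : 0 < a) (hb : 0 < b) (hab : Irrational (a / b)) :
    Dense {s : ℝ | ∃ j k : ℕ, s = j * a - k * b} := by
  have : Fact (0 < b) := ⟨hb⟩
  rw [Metric.dense_iff]
  intro t ε hε
  have hcluster : MapClusterPt (t : AddCircle b) atTop (fun j : ℕ => j • (a : AddCircle b)) := by
    rw [mapClusterPt_atTop_nsmul_iff_mem_topologicalClosure_zmultiples, ← SetLike.mem_coe,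
      AddSubgroup.topologicalClosure_coe, AddSubgroup.coe_zmultiples]
    exact AddCircle.denseRange_zsmul_coe_iff.2 hab t
  have hnhds : (↑) '' Metric.ball t ε ∈ 𝓝 (t : AddCircle b) :=
    QuotientAddGroup.isOpenMap_coe.image_mem_nhds (Metric.ball_mem_nhds t hε)
  have hlarge : ∀ᶠ j : ℕ in atTop, t + ε < j * a :=
    (tendsto_natCast_atTop_atTop.atTop_mul_const ha).eventually_gt_atTop _
  obtain ⟨j, ⟨s, hs, hsj⟩, hj⟩ := ((hcluster.frequently hnhds).and_eventually hlarge).exists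
  rw [eq_comm, ← AddCircle.coe_nsmul, QuotientAddGroup.eq_iff_sub_mem,
    AddSubgroup.mem_zmultiples_iff, nsmul_eq_mul] at hsj
  obtain ⟨k, hk⟩ := hsj
  rw [zsmul_eq_mul] at hk
  have hs_lt : s < t + ε := by
    have := Metric.mem_ball.1 hs
    rw [Real.dist_eq, abs_lt] at this
    linarith
  have hk_nonneg : 0 ≤ k := by
    have : (0 : ℝ) < k * b := by linarith
    exact_mod_cast (pos_of_mul_pos_left this hb.le).le
  lift k to ℕ using hk_nonneg
  exact ⟨s, hs, j, k, by push_cast at hk; linarith⟩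

theorem exp_nat_mul_log_two_sub_nat_mul_log_three (j k : ℕ) :
    exp (j * log 2 - k * log 3) = 2 ^ j / 3 ^ k := by
  rw [exp_sub, exp_nat_mul, exp_nat_mul, exp_log two_pos, exp_log three_pos]

theorem Ioi_subset_closure_pow_div_pow_mul {y : ℝ} (hy : 0 < y) :
    Ioi 0 ⊆ closure {z : ℝ | ∃ j k : ℕ, z = (2 ^ j / 3 ^ k) * y} := by
  have hdense := dense_nat_mul_sub_nat_mul (log_pos one_lt_two) (log_pos (by norm_num))
    irrational_log_two_div_log_three
  have himage : (fun s => exp s * y) '' {s : ℝ | ∃ j k : ℕ, s = j * log 2 - k * log 3} ⊆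
      {z : ℝ | ∃ j k : ℕ, z = (2 ^ j / 3 ^ k) * y} := by
    rintro _ ⟨_, ⟨j, k, rfl⟩, rfl⟩
    exact ⟨j, k, congrArg (· * y) (exp_nat_mul_log_two_sub_nat_mul_log_three j k)⟩
  intro x hx
  have hx_eq : exp (log (x / y)) * y = x := by
    rw [exp_log (div_pos hx hy), div_mul_cancel₀ x hy.ne']
  refine closure_mono himage (image_closure_subset_closure_image (by fun_prop) ?_)
  exact ⟨log (x / y), hdense.closure_eq ▸ mem_univ _, hx_eq⟩

/-- For any fixed `y ∈ [1,3]`, the set of numbers `(2^j / 3^k) * y` lying in `[1,3]`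
is dense in `[1,3]`. -/
theorem dense_tile_lengths (y : ℝ) (hy : y ∈ Set.Icc (1 : ℝ) 3) :
    Set.Icc (1 : ℝ) 3 ⊆
      closure {z : ℝ | ∃ j k : ℕ, z = (2 ^ j / 3 ^ k) * y ∧ z ∈ Set.Icc (1 : ℝ) 3} := by
  set D := {z : ℝ | ∃ j k : ℕ, z = (2 ^ j / 3 ^ k) * y}
  have hD : Ioo (1 : ℝ) 3 ∩ D ⊆
      {z : ℝ | ∃ j k : ℕ, z = (2 ^ j / 3 ^ k) * y ∧ z ∈ Set.Icc (1 : ℝ) 3} := by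
    rintro z ⟨hz, j, k, rfl⟩
    exact ⟨j, k, rfl, Ioo_subset_Icc_self hz⟩
  calc Icc (1 : ℝ) 3 = closure (Ioo 1 3) := (closure_Ioo (by norm_num)).symm
    _ ⊆ closure (Ioo 1 3 ∩ closure D) := closure_mono fun x hx =>
        ⟨hx, Ioi_subset_closure_pow_div_pow_mul (by linarith [hy.1]) (by linarith [hx.1] : 0 < x)⟩
    _ ⊆ closure (Ioo 1 3 ∩ D) := closure_minimal isOpen_Ioo.inter_closure isClosed_closure
    _ ⊆ _ := closure_mono hD
end
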